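/- Every PTL-definable language over a finite alphabet Σ is star-free, i.e., it can be generated from ∅ and the singleton languages {a} (a ∈ Σ) by finitely many applications of union, concatenation, and complement, without using the Kleene star. -/

import Mathlib

/-- PTL formulas over alphabet `α`: atoms, conjunction, negation, and the past operator. -/
inductive PTL (α : Type*) : Type _
  | atom : α → PTL α
  | conj : PTL α → PTL α → PTL α
  | neg : PTL α → PTL α
  | past : PTL α → PTL α

/-- Satisfaction of a PTL formula in string `w` at (1-based) position `n ∈ {1,…,N+1}`. -/
def PTL.Sat {α : Type*} (w : List α) : PTL α → ℕ → Prop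
  | .atom a, n => 1 ≤ n ∧ w[n - 1]? = some a
  | .conj ψ₁ ψ₂, n => PTL.Sat w ψ₁ n ∧ PTL.Sat w ψ₂ n
  | .neg ψ, n => ¬ PTL.Sat w ψ n
  | .past ψ, n => ∃ m, 1 ≤ m ∧ m < n ∧ PTL.Sat w ψ m

/-- A string `w` of length `N` satisfies `ψ` iff `w, N+1 ⊨ ψ`. -/
def PTL.Models {α : Type*} (w : List α) (ψ : PTL α) : Prop :=
  PTL.Sat w ψ (w.length + 1)

/-- A language is PTL-definable if it is the set of strings satisfying some PTL formula. -/
def PTLDefinable {α : Type*} (L : Set (List α)) : Prop :=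
  ∃ ψ : PTL α, ∀ w : List α, w ∈ L ↔ PTL.Models w ψ

/-- Star-free languages: generated from `∅` and the singletons `{a}` by union,
concatenation, and complement (no Kleene star). -/
inductive StarFree {α : Type*} : Set (List α) → Prop
  | empty : StarFree (∅ : Set (List α))
  | single (a : α) : StarFree {[a]}
  | union {L₁ L₂ : Set (List α)} : StarFree L₁ → StarFree L₂ → StarFree (L₁ ∪ L₂)
  | concat {L₁ L₂ : Set (List α)} : StarFree L₁ → StarFree L₂ →
      StarFree {w | ∃ u ∈ L₁, ∃ v ∈ L₂, w = u ++ v}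
  | compl {L : Set (List α)} : StarFree L → StarFree Lᶜ

/-! Whether a formula holds at a position depends only on the prefix ending there. So, writing
`E ψ` for the nonempty words whose last position satisfies `ψ`, the words satisfying `P ψ` form
`E ψ · Σ*`, and `E (P ψ) = E ψ · Σ⁺`. By induction on `ψ`, every `E ψ` is star-free
(`E π_a = Σ* a`, and negation is complement within `Σ⁺`, which is star-free as `Σ` is finite);
then so is the language of every formula. -/

namespace StarFree

variable {α : Type*}

theorem univ : StarFree (Set.univ : Set (List α)) :=
  Set.compl_empty ▸ empty.compl

theorem inter {L₁ L₂ : Set (List α)} (h₁ : StarFree L₁) (h₂ : StarFree L₂) :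
    StarFree (L₁ ∩ L₂) := by
  simpa only [Set.compl_union, compl_compl] using (h₁.compl.union h₂.compl).compl

theorem biUnion {ι : Type*} (s : Finset ι) {L : ι → Set (List α)}
    (h : ∀ i ∈ s, StarFree (L i)) : StarFree (⋃ i ∈ s, L i) := by
  classical
  induction s using Finset.induction_on with
  | empty => simpa using empty
  | insert i s _ ih =>
    rw [Finset.set_biUnion_insert]
    exact (h i (s.mem_insert_self i)).union
      (ih fun j hj => h j (Finset.mem_insert_of_mem hj))

theorem ne_nil [Fintype α] : StarFree {w : List α | w ≠ []} := by
  have hcover : {w : List α | w ≠ []} =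
      ⋃ a ∈ Finset.univ,
        {w | ∃ u ∈ ({[a]} : Set (List α)), ∃ v ∈ Set.univ, w = u ++ v} := by
    ext w
    cases w <;> simp
  exact hcover ▸ biUnion _ fun a _ => (single a).concat univ

end StarFree

namespace PTL

variable {α : Type*}

theorem sat_take_iff (ψ : PTL α) {w : List α} {n k : ℕ} (h : n ≤ k) :
    PTL.Sat (w.take k) ψ n ↔ PTL.Sat w ψ n := by
  induction ψ generalizing n with
  | atom a =>
    simp only [PTL.Sat, List.getElem?_take]
    grind
  | conj _ _ ih₁ ih₂ => simp only [PTL.Sat, ih₁ h, ih₂ h]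
  | neg _ ih => simp only [PTL.Sat, ih h]
  | past _ ih =>
    simp only [PTL.Sat]
    exact exists_congr fun m =>
      and_congr_right fun _ => and_congr_right fun hm => ih (by omega)

theorem sat_append_iff (ψ : PTL α) {u : List α} (v : List α) {n : ℕ} (h : n ≤ u.length) :
    PTL.Sat (u ++ v) ψ n ↔ PTL.Sat u ψ n := by
  rw [← sat_take_iff ψ (le_refl n), ← sat_take_iff ψ (w := u) (le_refl n),
    List.take_append_of_le_length h]

def language (ψ : PTL α) : Set (List α) :=
  {w | PTL.Models w ψ}

def lastLanguage (ψ : PTL α) : Set (List α) :=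
  {w | w ≠ [] ∧ PTL.Sat w ψ w.length}

theorem sat_past_iff (ψ : PTL α) {w : List α} {n : ℕ} (h : n ≤ w.length + 1) :
    PTL.Sat w ψ.past n ↔ ∃ u ∈ ψ.lastLanguage, ∃ v, w = u ++ v ∧ u.length < n := by
  constructor
  · rintro ⟨m, hm, hmn, hsat⟩
    have hlen : (w.take m).length = m := List.length_take_of_le (by omega)
    refine ⟨w.take m, ⟨?_, ?_⟩, w.drop m, (w.take_append_drop m).symm, by omega⟩
    · rw [← List.length_pos_iff_ne_nil]
      omega
    · rwa [hlen, sat_take_iff ψ le_rfl]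
  · rintro ⟨u, ⟨hu, hsat⟩, v, rfl, hun⟩
    exact ⟨u.length, List.length_pos_iff_ne_nil.mpr hu, hun,
      (sat_append_iff ψ v le_rfl).mpr hsat⟩

theorem lastLanguage_atom (a : α) :
    (atom a).lastLanguage =
      {w | ∃ u ∈ Set.univ, ∃ v ∈ ({[a]} : Set (List α)), w = u ++ v} := by
  ext w
  rcases w.eq_nil_or_concat with rfl | ⟨u, b, rfl⟩
  · simp [lastLanguage]
  · simp [lastLanguage, PTL.Sat]

theorem lastLanguage_conj (ψ₁ ψ₂ : PTL α) :
    (conj ψ₁ ψ₂).lastLanguage = ψ₁.lastLanguage ∩ ψ₂.lastLanguage := by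
  ext w
  simp only [lastLanguage, PTL.Sat, Set.mem_ofPred_eq, Set.mem_inter_iff]
  tauto

theorem lastLanguage_neg (ψ : PTL α) :
    (neg ψ).lastLanguage = {w | w ≠ []} ∩ ψ.lastLanguageᶜ := by
  ext w
  simp only [lastLanguage, PTL.Sat, Set.mem_ofPred_eq, Set.mem_inter_iff, Set.mem_compl_iff]
  tauto

theorem lastLanguage_past (ψ : PTL α) :
    (past ψ).lastLanguage =
      {w | ∃ u ∈ ψ.lastLanguage, ∃ v ∈ {w : List α | w ≠ []}, w = u ++ v} := by
  ext w
  simp only [lastLanguage, Set.mem_ofPred_eq, sat_past_iff ψ (Nat.le_succ w.length)]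
  constructor
  · rintro ⟨-, u, hu, v, rfl, hlt⟩
    exact ⟨u, hu, v, List.length_pos_iff_ne_nil.mp (by simpa using hlt), rfl⟩
  · rintro ⟨u, hu, v, hv, rfl⟩
    exact ⟨by simp [hv], u, hu, v, rfl,
      by simpa using List.length_pos_iff_ne_nil.mpr hv⟩

theorem language_atom (a : α) : (atom a).language = ∅ := by
  ext w
  simp [language, PTL.Models, PTL.Sat]

theorem language_conj (ψ₁ ψ₂ : PTL α) :
    (conj ψ₁ ψ₂).language = ψ₁.language ∩ ψ₂.language :=
  rfl

theorem language_neg (ψ : PTL α) : (neg ψ).language = ψ.languageᶜ :=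
  rfl

theorem language_past (ψ : PTL α) :
    (past ψ).language = {w | ∃ u ∈ ψ.lastLanguage, ∃ v ∈ Set.univ, w = u ++ v} := by
  ext w
  simp only [language, PTL.Models, Set.mem_ofPred_eq, sat_past_iff ψ le_rfl, Set.mem_univ,
    true_and]
  exact exists_congr fun u => and_congr_right fun _ => exists_congr fun v =>
    and_iff_left_of_imp fun hw => by simp [hw]

theorem starFree_lastLanguage [Fintype α] : ∀ ψ : PTL α, StarFree ψ.lastLanguage
  | atom a => lastLanguage_atom a ▸ StarFree.univ.concat (.single a)
  | conj ψ₁ ψ₂ => lastLanguage_conj ψ₁ ψ₂ ▸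
      (starFree_lastLanguage ψ₁).inter (starFree_lastLanguage ψ₂)
  | neg ψ => lastLanguage_neg ψ ▸ StarFree.ne_nil.inter (starFree_lastLanguage ψ).compl
  | past ψ => lastLanguage_past ψ ▸ (starFree_lastLanguage ψ).concat StarFree.ne_nil

theorem starFree_language [Fintype α] : ∀ ψ : PTL α, StarFree ψ.language
  | atom a => language_atom a ▸ StarFree.empty
  | conj ψ₁ ψ₂ => language_conj ψ₁ ψ₂ ▸
      (starFree_language ψ₁).inter (starFree_language ψ₂)
  | neg ψ => language_neg ψ ▸ (starFree_language ψ).compl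
  | past ψ => language_past ψ ▸ (starFree_lastLanguage ψ).concat StarFree.univ

end PTL

/-- Every PTL-definable language over a finite alphabet is star-free. -/
theorem ptl_definable_star_free {α : Type*} [Fintype α] (L : Set (List α))
    (h : PTLDefinable L) :
    StarFree L := by
  obtain ⟨ψ, hψ⟩ := h
  have hL : L = ψ.language := Set.ext hψ
  exact hL ▸ ψ.starFree_language
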